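/- Deterministic misclustering bound for K-SVD in the equal-variance, equal-separation case: let 0 ≤ β < α ≤ 1, let r ≥ 2 with n ≥ r+1, let Z be the membership matrix of a partition of {1,…,n} into r clusters each of size n/r, and set K̃ := (α−β)·ZZᵀ + β·E_n + (1−α)·I_n, where E_n is the n×n all-ones matrix. Let K ∈ ℝ^{n×n} be symmetric, let Û ∈ ℝ^{n×r} be a matrix whose columns are орthonormal eigenvectors of K associated with its r largest eigenvalues, and let C, with rows c_1,…,c_n, be a minimizer of ‖Û − M‖_F² over matrices M ∈ ℝ^{n×r} with at most r distinct rows. Then there exist ν ∈ ℝ^{r×r} with νᵀν = (r/n)·I_r and an orthogonal R ∈ ℝ^{r×r} such that |{i : ‖c_i − Z_i ν R‖ ≥ √(r/(2n))}| ≤ 64·r·‖K − K̃‖_F² / ((α−β)²·n). -/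

import Mathlib

/-!
Write `U = √(r/n) • Z`: its columns are an orthonormal basis of the column space of `Z`, and
`K̃ = (α - β)(n/r) UUᵀ + β 𝟙𝟙ᵀ + (1 - α) I` with `𝟙` in that column space. Against
`D = UUᵀ - ÛÛᵀ`, the matrix `K̃` gains at least `(α - β)(n/r) ‖D‖_F² / 2`, while `K` gains
nothing by Ky Fan's maximum principle, since `Û` spans its top eigenspace. Cauchy–Schwarz then
gives the Davis–Kahan bound `‖D‖_F ≤ 2 (r/n) ‖K - K̃‖_F / (α - β)`. An orthogonal Procrustes
rotation `R` satisfies `‖Û - UR‖_F ≤ ‖D‖_F`; as `UR` has at most `r` distinct rows, optimality of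
`C` gives `‖C - UR‖_F ≤ 2 ‖Û - UR‖_F`, and each row counted in the theorem contributes at least
`r/(2n)` to `‖C - UR‖_F²`.
-/

open Matrix

/-- Squared Frobenius norm `‖M‖_F² = Σ_{i,j} M_{ij}²`. -/
def frobSq {n d : ℕ} (M : Matrix (Fin n) (Fin d) ℝ) : ℝ := ∑ i, ∑ j, (M i j) ^ 2

/-- The number of distinct rows of a matrix. -/
noncomputable def nDistinctRows {n d : ℕ} (M : Matrix (Fin n) (Fin d) ℝ) : ℕ :=
  (Finset.univ.image fun i => M i).card

/-- The eigenvalues of a Hermitian matrix, listed in nonincreasing order. -/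
noncomputable def eigDesc {n : ℕ} {M : Matrix (Fin n) (Fin n) ℝ} (hM : M.IsHermitian)
    (i : Fin n) : ℝ :=
  hM.eigenvalues (Tuple.sort hM.eigenvalues i.rev)

open Finset

/-- The bathtub principle. -/
lemma sum_mul_le_sum_of_threshold {ι : Type*} [Fintype ι] [DecidableEq ι] (s : Finset ι)
    {f w : ι → ℝ} (t : ℝ) (hs : ∀ i ∈ s, t ≤ f i) (hsc : ∀ i ∉ s, f i ≤ t)
    (hw0 : ∀ i, 0 ≤ w i) (hw1 : ∀ i, w i ≤ 1) (hw : ∑ i, w i = #s) :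
    ∑ i, f i * w i ≤ ∑ i ∈ s, f i := by
  have key : ∀ i, (f i - t) * w i ≤ if i ∈ s then f i - t else 0 := by
    intro i
    split_ifs with hi
    · nlinarith [hs i hi, hw1 i]
    · nlinarith [hsc i hi, hw0 i]
  have hsum := Finset.sum_le_sum fun i (_ : i ∈ univ) => key i
  rw [sum_ite_mem, univ_inter, sum_sub_distrib, sum_const, nsmul_eq_mul] at hsum
  simp only [sub_mul, sum_sub_distrib, ← mul_sum, hw] at hsum
  linarith

section Frobenius

variable {n d : ℕ}

lemma frobSq_eq_trace (M : Matrix (Fin n) (Fin d) ℝ) : frobSq M = (Mᵀ * M).trace := by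
  simp only [frobSq, trace, Matrix.diag, mul_apply, transpose_apply, sq]
  exact sum_comm

lemma frobSq_nonneg (M : Matrix (Fin n) (Fin d) ℝ) : 0 ≤ frobSq M := by
  unfold frobSq; positivity

lemma frobSq_sub_comm (A B : Matrix (Fin n) (Fin d) ℝ) : frobSq (A - B) = frobSq (B - A) := by
  simp only [frobSq, Matrix.sub_apply, ← neg_sub (A _ _), neg_sq]

lemma frobSq_sub (A B : Matrix (Fin n) (Fin d) ℝ) :
    frobSq (A - B) = frobSq A - 2 * (Aᵀ * B).trace + frobSq B := by
  simp only [frobSq_eq_trace, transpose_sub, Matrix.sub_mul, Matrix.mul_sub, trace_sub]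
  rw [← trace_transpose (Bᵀ * A), transpose_mul, transpose_transpose]
  ring

lemma trace_transpose_mul_le (A B : Matrix (Fin n) (Fin d) ℝ) :
    (Aᵀ * B).trace ≤ √(frobSq A) * √(frobSq B) := by
  have hCS := sum_mul_sq_le_sq_mul_sq (univ : Finset (Fin n × Fin d))
    (fun p => A p.1 p.2) (fun p => B p.1 p.2)
  simp only [univ_product_univ.symm, sum_product] at hCS
  have htrace : (Aᵀ * B).trace = ∑ i, ∑ j, A i j * B i j := by
    simp only [trace, Matrix.diag, mul_apply, transpose_apply]
    exact sum_comm
  rw [htrace, ← Real.sqrt_mul (frobSq_nonneg A)]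
  exact Real.le_sqrt_of_sq_le hCS

lemma sqrt_frobSq_add_le (A B : Matrix (Fin n) (Fin d) ℝ) :
    √(frobSq (A + B)) ≤ √(frobSq A) + √(frobSq B) := by
  have hexp : frobSq (A + B) = frobSq A + 2 * (Aᵀ * B).trace + frobSq B := by
    have hneg : frobSq (-B) = frobSq B := by simp only [frobSq, Matrix.neg_apply, neg_sq]
    simpa [hneg] using frobSq_sub A (-B)
  rw [Real.sqrt_le_left (by positivity), hexp]
  nlinarith [trace_transpose_mul_le A B, Real.sq_sqrt (frobSq_nonneg A),
    Real.sq_sqrt (frobSq_nonneg B)]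

lemma frobSq_sub_le_four_mul {A C M : Matrix (Fin n) (Fin d) ℝ}
    (h : frobSq (A - C) ≤ frobSq (A - M)) : frobSq (C - M) ≤ 4 * frobSq (A - M) := by
  have htri := sqrt_frobSq_add_le (C - A) (A - M)
  rw [sub_add_sub_cancel, frobSq_sub_comm C A] at htri
  have hle := Real.sqrt_le_sqrt h
  have hsq := Real.sq_sqrt (frobSq_nonneg (C - M))
  nlinarith [Real.sq_sqrt (frobSq_nonneg (A - M)), Real.sqrt_nonneg (frobSq (C - M)),
    Real.sqrt_nonneg (frobSq (A - C))]

lemma card_mul_le_frobSq (M : Matrix (Fin n) (Fin d) ℝ) (δ : ℝ) :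
    (#{i | √δ ≤ √(∑ j, M i j ^ 2)} : ℝ) * δ ≤ frobSq M := by
  calc (#{i | √δ ≤ √(∑ j, M i j ^ 2)} : ℝ) * δ
      = ∑ i ∈ {i | √δ ≤ √(∑ j, M i j ^ 2)}, δ := by rw [sum_const, nsmul_eq_mul]
    _ ≤ ∑ i ∈ {i | √δ ≤ √(∑ j, M i j ^ 2)}, ∑ j, M i j ^ 2 :=
        sum_le_sum fun i hi => (Real.sqrt_le_sqrt_iff (by positivity)).mp (mem_filter.mp hi).2
    _ ≤ frobSq M := sum_le_sum_of_subset_of_nonneg (subset_univ _) fun _ _ _ => by positivity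

lemma sq_mul_frobSq_le_of_le_trace {A D : Matrix (Fin n) (Fin n) ℝ} (hA : Aᵀ = A)
    {γ : ℝ} (hγ : 0 ≤ γ) (h : γ * frobSq D / 2 ≤ (A * D).trace) :
    γ ^ 2 * frobSq D ≤ 4 * frobSq A := by
  have hCS := trace_transpose_mul_le A D
  rw [hA] at hCS
  have hA2 := Real.sq_sqrt (frobSq_nonneg A)
  have hD2 := Real.sq_sqrt (frobSq_nonneg D)
  rcases (Real.sqrt_nonneg (frobSq D)).eq_or_lt with hf | hf
  · rw [← hD2, ← hf]
    nlinarith [frobSq_nonneg A]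
  · have hle : γ * √(frobSq D) ≤ 2 * √(frobSq A) := le_of_mul_le_mul_right (by nlinarith) hf
    nlinarith [mul_self_le_mul_self (mul_nonneg hγ hf.le) hle]

end Frobenius

lemma dotProduct_mulVec_self_eq {m ι : Type*} [Fintype m] [Fintype ι] (A : Matrix m ι ℝ)
    (x : ι → ℝ) : (A *ᵥ x) ⬝ᵥ (A *ᵥ x) = x ⬝ᵥ ((Aᵀ * A) *ᵥ x) := by
  rw [dotProduct_mulVec, ← mulVec_transpose, mulVec_mulVec, dotProduct_comm]

section OrthonormalColumns

variable {m ι : Type*} [Fintype m] [Fintype ι] [DecidableEq ι] {U : Matrix m ι ℝ}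

lemma dotProduct_mulVec_self_of_orthonormal (hU : Uᵀ * U = 1) (x : ι → ℝ) :
    (U *ᵥ x) ⬝ᵥ (U *ᵥ x) = x ⬝ᵥ x := by
  rw [dotProduct_mulVec_self_eq, hU, one_mulVec]

lemma dotProduct_transpose_mulVec_self_le (hU : Uᵀ * U = 1) (y : m → ℝ) :
    (Uᵀ *ᵥ y) ⬝ᵥ (Uᵀ *ᵥ y) ≤ y ⬝ᵥ y := by
  set p := U *ᵥ (Uᵀ *ᵥ y)
  have hyp : y ⬝ᵥ p = (Uᵀ *ᵥ y) ⬝ᵥ (Uᵀ *ᵥ y) := by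
    rw [dotProduct_mulVec, ← mulVec_transpose]
  have hpp : p ⬝ᵥ p = (Uᵀ *ᵥ y) ⬝ᵥ (Uᵀ *ᵥ y) := dotProduct_mulVec_self_of_orthonormal hU _
  have hexp : (y - p) ⬝ᵥ (y - p) = y ⬝ᵥ y - 2 * (y ⬝ᵥ p) + p ⬝ᵥ p := by
    simp only [sub_dotProduct, dotProduct_sub, dotProduct_comm p y]; ring
  have := dotProduct_self_star_nonneg (y - p)
  simp only [star_trivial] at this
  linarith

lemma sum_sq_row_le_one [DecidableEq m] (hU : Uᵀ * U = 1) (i : m) : ∑ a, U i a ^ 2 ≤ 1 := by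
  have h := dotProduct_transpose_mulVec_self_le hU (Pi.single i 1)
  simpa [mulVec_single_one, dotProduct, sq, Pi.single_apply] using h

lemma mul_transpose_mul_mul_transpose_of_orthonormal (hU : Uᵀ * U = 1) :
    U * Uᵀ * (U * Uᵀ) = U * Uᵀ := by
  rw [Matrix.mul_assoc, ← Matrix.mul_assoc Uᵀ, hU, Matrix.one_mul]

lemma trace_mul_transpose_of_orthonormal (hU : Uᵀ * U = 1) :
    (U * Uᵀ).trace = Fintype.card ι := by
  rw [trace_mul_comm, hU, trace_one]

end OrthonormalColumns

lemma Matrix.IsHermitian.exists_orthogonal_diagonalize {ι : Type*} [Fintype ι] [DecidableEq ι]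
    {A : Matrix ι ι ℝ} (hA : A.IsHermitian) :
    ∃ V : Matrix ι ι ℝ, Vᵀ * V = 1 ∧ V * Vᵀ = 1 ∧ A = V * diagonal hA.eigenvalues * Vᵀ := by
  have hstar : star (hA.eigenvectorUnitary : Matrix ι ι ℝ) = (hA.eigenvectorUnitary)ᵀ := by
    rw [star_eq_conjTranspose, conjTranspose_eq_transpose_of_trivial]
  refine ⟨hA.eigenvectorUnitary, ?_, ?_, ?_⟩
  · rw [← hstar]; exact Unitary.coe_star_mul_self _
  · rw [← hstar]; exact Unitary.coe_mul_star_self _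
  · have h := hA.spectral_theorem
    rw [Unitary.conjStarAlgAut_apply, hstar] at h
    simpa using h

lemma trace_transpose_mul_mul_eq_sum_of_mulVec_eq {m ι : Type*} [Fintype m] [Fintype ι]
    [DecidableEq ι] {K : Matrix m m ℝ} {U : Matrix m ι ℝ} (hU : Uᵀ * U = 1) (μ : ι → ℝ)
    (hKU : ∀ a, K *ᵥ (fun i => U i a) = μ a • fun i => U i a) :
    (Uᵀ * K * U).trace = ∑ a, μ a := by
  have hcols : K * U = U * diagonal μ := by
    ext i a
    rw [mul_diagonal]
    simpa [mulVec, dotProduct, mul_apply, mul_comm] using congrFun (hKU a) i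
  rw [Matrix.mul_assoc, hcols, ← Matrix.mul_assoc, hU, Matrix.one_mul, trace_diagonal]

lemma trace_transpose_mul_diagonal_mul {m ι : Type*} [Fintype m] [Fintype ι] [DecidableEq m]
    (W : Matrix m ι ℝ) (μ : m → ℝ) :
    (Wᵀ * diagonal μ * W).trace = ∑ j, μ j * ∑ a, W j a ^ 2 := by
  simp only [trace, Matrix.diag, mul_apply, transpose_apply, diagonal_apply, mul_ite, mul_zero,
    sum_ite_eq', mem_univ, if_true]
  rw [sum_comm]
  simp only [mul_sum]
  exact sum_congr rfl fun j _ => sum_congr rfl fun a _ => by ring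

lemma eigDesc_antitone {n : ℕ} {K : Matrix (Fin n) (Fin n) ℝ} (hK : K.IsHermitian) :
    Antitone (eigDesc hK) :=
  fun _ _ hab => Tuple.monotone_sort hK.eigenvalues (Fin.rev_le_rev.mpr hab)

/-- Ky Fan's maximum principle. -/
lemma trace_transpose_mul_mul_le_sum_eigDesc {n r : ℕ} (hr : 0 < r) (hrn : r ≤ n)
    {K : Matrix (Fin n) (Fin n) ℝ} (hK : K.IsHermitian) {U : Matrix (Fin n) (Fin r) ℝ}
    (hU : Uᵀ * U = 1) :
    (Uᵀ * K * U).trace ≤ ∑ a : Fin r, eigDesc hK (Fin.castLE hrn a) := by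
  obtain ⟨V, hV, hV', hKV⟩ := hK.exists_orthogonal_diagonalize
  set W := Vᵀ * U
  have hW : Wᵀ * W = 1 := by
    rw [transpose_mul, transpose_transpose, Matrix.mul_assoc, ← Matrix.mul_assoc V, hV',
      Matrix.one_mul, hU]
  -- `w j = ‖Uᵀ vⱼ‖²` for the eigenvectors `vⱼ`: weights in `[0, 1]` summing to `r`
  set w : Fin n → ℝ := fun j => ∑ a, W j a ^ 2
  have htrace : (Uᵀ * K * U).trace = ∑ j, hK.eigenvalues j * w j := by
    rw [← trace_transpose_mul_diagonal_mul]
    simp only [W, hKV, transpose_mul, transpose_transpose, Matrix.mul_assoc]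
  have hwsum : ∑ j, w j = r := by
    have := frobSq_eq_trace W
    rwa [hW, trace_one, Fintype.card_fin] at this
  set σ := Fin.revPerm.trans (Tuple.sort hK.eigenvalues)
  have htop : ∑ a : Fin r, eigDesc hK (Fin.castLE hrn a) =
      ∑ j ∈ univ.map (Fin.castLEEmb hrn), eigDesc hK j := by
    rw [sum_map]; rfl
  rw [htrace, ← Equiv.sum_comp σ, htop]
  refine sum_mul_le_sum_of_threshold _ (eigDesc hK ⟨r - 1, by omega⟩) ?_ ?_
    (fun j => by positivity) (fun j => sum_sq_row_le_one hW _) ?_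
  · intro j hj
    obtain ⟨a, -, rfl⟩ := mem_map.mp hj
    exact eigDesc_antitone hK (Fin.le_def.mpr (by simp only [Fin.castLEEmb_apply, Fin.val_castLE]; omega))
  · intro j hj
    refine eigDesc_antitone hK (Fin.mk_le_mk.mpr ?_)
    by_contra hlt
    exact hj (mem_map.mpr ⟨⟨j, by omega⟩, mem_univ _, rfl⟩)
  · rw [Equiv.sum_comp σ w, hwsum, card_map, card_univ, Fintype.card_fin]

lemma exists_orthogonal_trace_transpose_mul_eq_sum_sqrt {ι : Type*} [Fintype ι] [DecidableEq ι]
    {G : Matrix ι ι ℝ} {d : ι → ℝ} (hG : Gᵀ * G = diagonal d) :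
    ∃ N : Matrix ι ι ℝ, Nᵀ * N = 1 ∧ (Nᵀ * G).trace = ∑ i, √(d i) := by
  set g : ι → EuclideanSpace ℝ ι := fun i => WithLp.toLp 2 fun k => G k i
  have hinner : ∀ i j, inner ℝ (g i) (g j) = diagonal d i j := by
    intro i j
    rw [← hG, EuclideanSpace.inner_eq_star_dotProduct]
    simp [g, mul_apply, dotProduct, mul_comm]
  have hd : ∀ i, 0 ≤ d i := fun i => by
    simpa only [hinner, diagonal_apply_eq] using real_inner_self_nonneg (x := g i)
  have hg0 : ∀ i, d i = 0 → g i = 0 := fun i hi => by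
    rw [← inner_self_eq_zero (𝕜 := ℝ), hinner, diagonal_apply_eq, hi]
  set v : ι → EuclideanSpace ℝ ι := fun i => (√(d i))⁻¹ • g i
  have hvg : ∀ i j, inner ℝ (v i) (g j) = (√(d i))⁻¹ * diagonal d i j := fun i j => by
    simp only [v, real_inner_smul_left, hinner]
  have hsqrt_ne : ∀ i, d i ≠ 0 → √(d i) ≠ 0 := fun i hi =>
    Real.sqrt_ne_zero'.mpr (lt_of_le_of_ne (hd i) (Ne.symm hi))
  have hsqrt : ∀ i, d i ≠ 0 → (√(d i))⁻¹ * d i = √(d i) := fun i hi => by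
    rw [inv_mul_eq_iff_eq_mul₀ (hsqrt_ne i hi), Real.mul_self_sqrt (hd i)]
  have hv : Orthonormal ℝ ({i | d i ≠ 0}.domRestrict v) := by
    rw [orthonormal_iff_ite]
    rintro ⟨i, hi⟩ ⟨j, hj⟩
    simp only [Set.domRestrict_apply, Subtype.mk.injEq]
    rw [show v j = (√(d j))⁻¹ • g j from rfl, real_inner_smul_right, hvg]
    by_cases hij : i = j
    · subst hij
      rw [diagonal_apply_eq, if_pos rfl, hsqrt i hi, inv_mul_cancel₀ (hsqrt_ne i hi)]
    · rw [diagonal_apply_ne _ hij, if_neg hij, mul_zero, mul_zero]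
  obtain ⟨b, hb⟩ := hv.exists_orthonormalBasis_extension_of_card_eq (by simp)
  set N : Matrix ι ι ℝ := Matrix.of fun k i => b i k
  refine ⟨N, ?_, ?_⟩
  · ext i j
    have := orthonormal_iff_ite.mp b.orthonormal j i
    rw [EuclideanSpace.inner_eq_star_dotProduct] at this
    simpa [N, mul_apply, dotProduct, one_apply, eq_comm] using this
  · have : ∀ i, (Nᵀ * G) i i = inner ℝ (b i) (g i) := fun i => by
      simp [N, mul_apply, EuclideanSpace.inner_eq_star_dotProduct, dotProduct, g, mul_comm]
    simp only [trace, Matrix.diag, this]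
    refine sum_congr rfl fun i _ => ?_
    by_cases hi : d i = 0
    · rw [hg0 i hi, inner_zero_right, hi, Real.sqrt_zero]
    · rw [hb i hi, hvg, diagonal_apply_eq, hsqrt i hi]

/-- Orthogonal Procrustes. With `BᵀB = V diag(d) Vᵀ`, the columns of `BV` are orthogonal of norms
`√dᵢ ≤ 1`; aligning an orthonormal basis with them gives `tr(RᵀB) = Σ √dᵢ ≥ Σ dᵢ = tr(BᵀB)`. -/
lemma exists_orthogonal_trace_transpose_mul_self_le {ι : Type*} [Fintype ι] [DecidableEq ι]
    {B : Matrix ι ι ℝ} (hB : ∀ x, (B *ᵥ x) ⬝ᵥ (B *ᵥ x) ≤ x ⬝ᵥ x) :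
    ∃ R : Matrix ι ι ℝ, Rᵀ * R = 1 ∧ (Bᵀ * B).trace ≤ (Rᵀ * B).trace := by
  have hH : (Bᵀ * B).IsHermitian := by simpa using isHermitian_conjTranspose_mul_self B
  obtain ⟨V, hV, hV', hBV⟩ := hH.exists_orthogonal_diagonalize
  set d := hH.eigenvalues
  have hG : (B * V)ᵀ * (B * V) = diagonal d := by
    rw [transpose_mul, Matrix.mul_assoc, ← Matrix.mul_assoc Bᵀ, hBV]
    simp only [Matrix.mul_assoc, hV, Matrix.mul_one]
    rw [← Matrix.mul_assoc, hV, Matrix.one_mul]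
  have hd : ∀ i, 0 ≤ d i ∧ d i ≤ 1 := fun i => by
    have hdi : d i = (B *ᵥ (V *ᵥ Pi.single i 1)) ⬝ᵥ (B *ᵥ (V *ᵥ Pi.single i 1)) := by
      rw [mulVec_mulVec, dotProduct_mulVec_self_eq, hG]
      simp
    have hVi : (V *ᵥ Pi.single i 1) ⬝ᵥ (V *ᵥ Pi.single i 1) = 1 := by
      rw [dotProduct_mulVec_self_of_orthonormal hV]
      simp
    rw [hdi]
    refine ⟨?_, (hB _).trans_eq hVi⟩
    simpa using dotProduct_self_star_nonneg (B *ᵥ (V *ᵥ Pi.single i 1))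
  obtain ⟨N, hN, hNG⟩ := exists_orthogonal_trace_transpose_mul_eq_sum_sqrt hG
  refine ⟨N * Vᵀ, ?_, ?_⟩
  · rw [transpose_mul, transpose_transpose, Matrix.mul_assoc, ← Matrix.mul_assoc Nᵀ, hN,
      Matrix.one_mul, hV']
  · have hlhs : (Bᵀ * B).trace = ∑ i, d i := by
      rw [hBV, trace_mul_cycle, hV, Matrix.one_mul, trace_diagonal]
    have hrhs : ((N * Vᵀ)ᵀ * B).trace = ∑ i, √(d i) := by
      rw [← hNG, transpose_mul, transpose_transpose, Matrix.mul_assoc, trace_mul_comm,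
        Matrix.mul_assoc]
    rw [hlhs, hrhs]
    refine sum_le_sum fun i _ => ?_
    nlinarith [Real.sq_sqrt (hd i).1, Real.sqrt_nonneg (d i), Real.sqrt_le_one.mpr (hd i).2]

section Projections

variable {n r : ℕ} {U W : Matrix (Fin n) (Fin r) ℝ}

lemma trace_mul_transpose_mul_mul_transpose (U W : Matrix (Fin n) (Fin r) ℝ) :
    (U * Uᵀ * (W * Wᵀ)).trace = ((Uᵀ * W)ᵀ * (Uᵀ * W)).trace := by
  rw [← Matrix.mul_assoc, trace_mul_comm, transpose_mul, transpose_transpose]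
  simp only [Matrix.mul_assoc]

lemma trace_projection_mul_sub (hU : Uᵀ * U = 1) :
    (U * Uᵀ * (U * Uᵀ - W * Wᵀ)).trace = r - ((Uᵀ * W)ᵀ * (Uᵀ * W)).trace := by
  rw [Matrix.mul_sub, trace_sub, mul_transpose_mul_mul_transpose_of_orthonormal hU,
    trace_mul_transpose_of_orthonormal hU, trace_mul_transpose_mul_mul_transpose,
    Fintype.card_fin]

lemma frobSq_projection_sub (hU : Uᵀ * U = 1) (hW : Wᵀ * W = 1) :
    frobSq (U * Uᵀ - W * Wᵀ) = 2 * (r - ((Uᵀ * W)ᵀ * (Uᵀ * W)).trace) := by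
  have hproj : ∀ {V : Matrix (Fin n) (Fin r) ℝ}, Vᵀ * V = 1 → frobSq (V * Vᵀ) = r := fun hV => by
    rw [frobSq_eq_trace, transpose_mul, transpose_transpose,
      mul_transpose_mul_mul_transpose_of_orthonormal hV, trace_mul_transpose_of_orthonormal hV,
      Fintype.card_fin]
  rw [frobSq_sub, hproj hU, hproj hW, transpose_mul, transpose_transpose,
    trace_mul_transpose_mul_mul_transpose]
  ring

lemma frobSq_sub_mul_orthogonal (hU : Uᵀ * U = 1) (hW : Wᵀ * W = 1)
    {R : Matrix (Fin r) (Fin r) ℝ} (hR : Rᵀ * R = 1) :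
    frobSq (W - U * R) = 2 * (r - (Rᵀ * (Uᵀ * W)).trace) := by
  have hUR : (U * R)ᵀ * (U * R) = 1 := by
    rw [transpose_mul, Matrix.mul_assoc, ← Matrix.mul_assoc Uᵀ, hU, Matrix.one_mul, hR]
  rw [frobSq_sub, frobSq_eq_trace, frobSq_eq_trace, hW, hUR, trace_one, Fintype.card_fin,
    ← trace_transpose (Wᵀ * (U * R))]
  simp only [transpose_mul, transpose_transpose, Matrix.mul_assoc]
  ring

lemma exists_orthogonal_frobSq_sub_mul_le (hU : Uᵀ * U = 1) (hW : Wᵀ * W = 1) :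
    ∃ R : Matrix (Fin r) (Fin r) ℝ, Rᵀ * R = 1 ∧
      frobSq (W - U * R) ≤ frobSq (U * Uᵀ - W * Wᵀ) := by
  have hB : ∀ x, ((Uᵀ * W) *ᵥ x) ⬝ᵥ ((Uᵀ * W) *ᵥ x) ≤ x ⬝ᵥ x := fun x => by
    rw [← mulVec_mulVec, ← dotProduct_mulVec_self_of_orthonormal hW x]
    exact dotProduct_transpose_mulVec_self_le hU _
  obtain ⟨R, hR, htr⟩ := exists_orthogonal_trace_transpose_mul_self_le hB
  refine ⟨R, hR, ?_⟩
  rw [frobSq_sub_mul_orthogonal hU hW hR, frobSq_projection_sub hU hW]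
  linarith

lemma trace_vecMulVec_mul_mul_transpose (v : Fin n → ℝ) (W : Matrix (Fin n) (Fin r) ℝ) :
    (vecMulVec v v * (W * Wᵀ)).trace = (Wᵀ *ᵥ v) ⬝ᵥ (Wᵀ *ᵥ v) := by
  rw [vecMulVec_mul, trace_vecMulVec, dotProduct_mulVec_self_eq, transpose_transpose,
    ← mulVec_transpose, transpose_mul, transpose_transpose, dotProduct_comm]

lemma trace_vecMulVec_mul_projection_sub_nonneg (hU : Uᵀ * U = 1) (hW : Wᵀ * W = 1)
    (x : Fin r → ℝ) : 0 ≤ (vecMulVec (U *ᵥ x) (U *ᵥ x) * (U * Uᵀ - W * Wᵀ)).trace := by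
  rw [Matrix.mul_sub, trace_sub, trace_vecMulVec_mul_mul_transpose,
    trace_vecMulVec_mul_mul_transpose, mulVec_mulVec, hU, one_mulVec]
  have := dotProduct_transpose_mulVec_self_le hW (U *ᵥ x)
  rw [dotProduct_mulVec_self_of_orthonormal hU] at this
  linarith

lemma mul_frobSq_le_trace_mul_projection_sub (hU : Uᵀ * U = 1) (hW : Wᵀ * W = 1)
    {β : ℝ} (hβ : 0 ≤ β) (γ δ : ℝ) (x : Fin r → ℝ) :
    γ * frobSq (U * Uᵀ - W * Wᵀ) / 2 ≤
      ((γ • (U * Uᵀ) + β • vecMulVec (U *ᵥ x) (U *ᵥ x) + δ • 1) *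
        (U * Uᵀ - W * Wᵀ)).trace := by
  have htrace : (U * Uᵀ - W * Wᵀ).trace = 0 := by
    rw [trace_sub, trace_mul_transpose_of_orthonormal hU, trace_mul_transpose_of_orthonormal hW,
      sub_self]
  simp only [Matrix.add_mul, Matrix.smul_mul, Matrix.one_mul, trace_add, trace_smul, htrace,
    smul_eq_mul, mul_zero, add_zero]
  rw [trace_projection_mul_sub hU, frobSq_projection_sub hU hW]
  nlinarith [trace_vecMulVec_mul_projection_sub_nonneg hU hW x]

lemma trace_mul_projection_sub_nonpos (hr : 0 < r) (hrn : r ≤ n)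
    {K : Matrix (Fin n) (Fin n) ℝ} (hK : K.IsHermitian) (hU : Uᵀ * U = 1) (hW : Wᵀ * W = 1)
    (hWeig : ∀ a, K *ᵥ (fun i => W i a) = eigDesc hK (Fin.castLE hrn a) • fun i => W i a) :
    (K * (U * Uᵀ - W * Wᵀ)).trace ≤ 0 := by
  have hmax := trace_transpose_mul_mul_le_sum_eigDesc hr hrn hK hU
  have htop := trace_transpose_mul_mul_eq_sum_of_mulVec_eq hW _ hWeig
  rw [Matrix.mul_sub, trace_sub, ← Matrix.mul_assoc, ← Matrix.mul_assoc, trace_mul_comm,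
    trace_mul_comm (K * W), ← Matrix.mul_assoc, ← Matrix.mul_assoc]
  linarith

/-- Davis–Kahan `sin Θ` bound. -/
lemma sq_mul_frobSq_projection_sub_le (hr : 0 < r) (hrn : r ≤ n)
    {K : Matrix (Fin n) (Fin n) ℝ} (hK : K.IsHermitian) (hU : Uᵀ * U = 1) (hW : Wᵀ * W = 1)
    (hWeig : ∀ a, K *ᵥ (fun i => W i a) = eigDesc hK (Fin.castLE hrn a) • fun i => W i a)
    {γ β : ℝ} (hγ : 0 ≤ γ) (hβ : 0 ≤ β) (δ : ℝ) {x : Fin r → ℝ} {v : Fin n → ℝ}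
    (hv : U *ᵥ x = v) :
    γ ^ 2 * frobSq (U * Uᵀ - W * Wᵀ) ≤
      4 * frobSq (K - (γ • (U * Uᵀ) + β • vecMulVec v v + δ • 1)) := by
  subst hv
  have hKsymm : Kᵀ = K := by rw [← conjTranspose_eq_transpose_of_trivial]; exact hK
  rw [frobSq_sub_comm K]
  refine sq_mul_frobSq_le_of_le_trace ?_ hγ ?_
  · rw [transpose_sub, hKsymm]
    simp [transpose_add, transpose_smul, transpose_mul]
  · rw [Matrix.sub_mul, trace_sub]
    linarith [mul_frobSq_le_trace_mul_projection_sub hU hW hβ γ δ x,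
      trace_mul_projection_sub_nonpos hr hrn hK hU hW hWeig]

lemma exists_orthogonal_sq_mul_frobSq_sub_mul_le (hr : 0 < r) (hrn : r ≤ n)
    {K : Matrix (Fin n) (Fin n) ℝ} (hK : K.IsHermitian) (hU : Uᵀ * U = 1) (hW : Wᵀ * W = 1)
    (hWeig : ∀ a, K *ᵥ (fun i => W i a) = eigDesc hK (Fin.castLE hrn a) • fun i => W i a)
    {γ β : ℝ} (hγ : 0 ≤ γ) (hβ : 0 ≤ β) (δ : ℝ) {x : Fin r → ℝ} {v : Fin n → ℝ}
    (hv : U *ᵥ x = v) :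
    ∃ R : Matrix (Fin r) (Fin r) ℝ, Rᵀ * R = 1 ∧ γ ^ 2 * frobSq (W - U * R) ≤
      4 * frobSq (K - (γ • (U * Uᵀ) + β • vecMulVec v v + δ • 1)) := by
  obtain ⟨R, hR, hWR⟩ := exists_orthogonal_frobSq_sub_mul_le hU hW
  exact ⟨R, hR, (mul_le_mul_of_nonneg_left hWR (sq_nonneg γ)).trans
    (sq_mul_frobSq_projection_sub_le hr hrn hK hU hW hWeig hγ hβ δ hv)⟩

end Projections

def membershipMatrix {ι κ : Type*} [DecidableEq κ] (z : ι → κ) : Matrix ι κ ℝ :=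
  Matrix.of fun i k => if z i = k then 1 else 0

section Membership

variable {ι κ : Type*} [DecidableEq κ] (z : ι → κ)

lemma membershipMatrix_transpose_mul_self [Fintype ι] {m : ℕ} (hz : ∀ k, #{i | z i = k} = m) :
    (membershipMatrix z)ᵀ * membershipMatrix z = (m : ℝ) • 1 := by
  ext k l
  by_cases hkl : k = l
  · subst hkl
    simp [membershipMatrix, mul_apply, ← hz k, ← ite_and]
  · simp only [membershipMatrix, mul_apply, transpose_apply, of_apply, mul_ite, mul_one, mul_zero,
      Matrix.smul_apply, ne_eq, hkl, not_false_eq_true, one_apply_ne, smul_eq_mul]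
    refine sum_eq_zero fun i _ => ?_
    split_ifs with hl hk
    · exact absurd (hk.symm.trans hl) hkl
    all_goals rfl

lemma membershipMatrix_mulVec_one [Fintype κ] : membershipMatrix z *ᵥ 1 = 1 := by
  ext i
  simp [membershipMatrix, mulVec, dotProduct]

lemma membershipMatrix_mul_apply [Fintype κ] {d : Type*} (M : Matrix κ d ℝ) (i : ι) :
    (membershipMatrix z * M) i = M (z i) := by
  ext j
  simp [membershipMatrix, mul_apply]

lemma smul_membershipMatrix_transpose_mul_self [Fintype ι] {m : ℕ}
    (hz : ∀ k, #{i | z i = k} = m) {c : ℝ} (hc : c * c * m = 1) :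
    (c • membershipMatrix z)ᵀ * (c • membershipMatrix z) = 1 := by
  rw [transpose_smul, Matrix.smul_mul, Matrix.mul_smul, membershipMatrix_transpose_mul_self z hz,
    smul_smul, smul_smul, hc, one_smul]

lemma membershipMatrix_mul_transpose [Fintype κ] {c m : ℝ} (hc : c * c * m = 1) :
    membershipMatrix z * (membershipMatrix z)ᵀ =
      m • ((c • membershipMatrix z) * (c • membershipMatrix z)ᵀ) := by
  rw [transpose_smul, Matrix.smul_mul, Matrix.mul_smul, smul_smul, smul_smul,
    show m * c * c = c * c * m by ring, hc, one_smul]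

lemma smul_membershipMatrix_mulVec_inv_smul_one [Fintype κ] {c : ℝ} (hc : c ≠ 0) :
    (c • membershipMatrix z) *ᵥ (c⁻¹ • 1) = 1 := by
  rw [mulVec_smul, smul_mulVec, membershipMatrix_mulVec_one, smul_smul, inv_mul_cancel₀ hc,
    one_smul]

end Membership

lemma nDistinctRows_membershipMatrix_mul_le {n r d : ℕ} (z : Fin n → Fin r)
    (M : Matrix (Fin r) (Fin d) ℝ) : nDistinctRows (membershipMatrix z * M) ≤ r := by
  unfold nDistinctRows
  simp only [membershipMatrix_mul_apply]
  calc #(univ.image fun i => M (z i)) ≤ #(univ.image M) :=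
        card_le_card (image_subset_iff.mpr fun i _ => mem_image_of_mem M (mem_univ (z i)))
    _ ≤ r := card_image_le.trans (card_univ.trans (Fintype.card_fin r)).le

/-- deterministic misclustering bound for K-SVD in the equal-variance,
equal-separation case: for `0 ≤ β < α ≤ 1`, `r ≥ 2`, `n ≥ r+1`, `Z` the membership matrix
of a partition into `r` clusters of size `n/r`, `K̃ = (α−β)·ZZᵀ + β·E_n + (1−α)·I_n`, `K`
symmetric with `Û` a matrix of orthonormal eigenvectors of `K` for its `r` largest
eigenvalues, and `C` (rows `c_i`) a minimizer of `‖Û − M‖_F²` over matrices with at most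
`r` distinct rows, there exist `ν` with `νᵀν = (r/n)·I_r` and orthogonal `R` such that
`|{i : ‖c_i − Z_i ν R‖ ≥ √(r/(2n))}| ≤ 64·r·‖K − K̃‖_F²/((α−β)²·n)`. -/
theorem stmt_17 (n r : ℕ) (hn : r + 1 ≤ n) (hdvd : r ∣ n)
    (α β : ℝ) (hβ0 : 0 ≤ β) (hβα : β < α)
    (z : Fin n → Fin r)
    (hsize : ∀ k : Fin r, (Finset.univ.filter fun i => z i = k).card = n / r)
    (Z : Matrix (Fin n) (Fin r) ℝ)
    (hZ : Z = Matrix.of (fun i k => if z i = k then (1 : ℝ) else 0))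
    (Kt : Matrix (Fin n) (Fin n) ℝ)
    (hKt : Kt = (α - β) • (Z * Zᵀ) + β • (Matrix.of fun _ _ => (1 : ℝ)) +
      (1 - α) • (1 : Matrix (Fin n) (Fin n) ℝ))
    (K : Matrix (Fin n) (Fin n) ℝ) (hK : K.IsHermitian)
    (Uh : Matrix (Fin n) (Fin r) ℝ)
    (hUorth : Uhᵀ * Uh = 1)
    (hUeig : ∀ a : Fin r,
      K *ᵥ (fun i => Uh i a) =
        eigDesc hK ⟨(a : ℕ), by omega⟩ • (fun i => Uh i a))
    (C : Matrix (Fin n) (Fin r) ℝ)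
    (hCopt : ∀ M : Matrix (Fin n) (Fin r) ℝ, nDistinctRows M ≤ r →
      frobSq (Uh - C) ≤ frobSq (Uh - M)) :
    ∃ (ν R : Matrix (Fin r) (Fin r) ℝ),
      νᵀ * ν = ((r : ℝ) / n) • (1 : Matrix (Fin r) (Fin r) ℝ) ∧ Rᵀ * R = 1 ∧
      ((Finset.univ.filter fun i : Fin n =>
          Real.sqrt ((r : ℝ) / (2 * n)) ≤
            Real.sqrt (∑ a, (C i a - (Z * ν * R) i a) ^ 2)).card : ℝ) ≤
        64 * r * frobSq (K - Kt) / ((α - β) ^ 2 * n) := by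
  have hr : 0 < r := Nat.pos_of_dvd_of_pos hdvd (by omega)
  have hr0 : (r : ℝ) ≠ 0 := Nat.cast_ne_zero.mpr hr.ne'
  have hn0 : (n : ℝ) ≠ 0 := Nat.cast_ne_zero.mpr (by omega)
  replace hZ : Z = membershipMatrix z := hZ
  subst hZ
  set c := √((r : ℝ) / n)
  have hc : c * c = r / n := Real.mul_self_sqrt (by positivity)
  have hcn : c * c * (n / r) = 1 := by rw [hc]; field_simp
  set U := c • membershipMatrix z
  have hU : Uᵀ * U = 1 :=
    smul_membershipMatrix_transpose_mul_self z hsize (by rwa [Nat.cast_div hdvd hr0])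
  set γ := (α - β) * (n / r)
  have hγ : 0 ≤ γ := mul_nonneg (sub_nonneg.mpr hβα.le) (by positivity)
  have hKt' : Kt = γ • (U * Uᵀ) + β • vecMulVec 1 1 + (1 - α) • 1 := by
    rw [hKt, membershipMatrix_mul_transpose z hcn, smul_smul]
    congr 2
    ext i j
    simp [vecMulVec]
  obtain ⟨R, hR, hUhR⟩ := exists_orthogonal_sq_mul_frobSq_sub_mul_le hr (by omega) hK hU hUorth
    hUeig hγ hβ0 (1 - α)
    (smul_membershipMatrix_mulVec_inv_smul_one z (Real.sqrt_ne_zero'.mpr (by positivity)))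
  rw [← hKt'] at hUhR
  have hCR : frobSq (C - U * R) ≤ 4 * frobSq (Uh - U * R) := by
    refine frobSq_sub_le_four_mul (hCopt _ ?_)
    simpa [U, Matrix.smul_mul] using nDistinctRows_membershipMatrix_mul_le z (c • R)
  refine ⟨c • 1, R, by rw [transpose_smul, transpose_one, smul_mul_smul, Matrix.one_mul, hc],
    hR, ?_⟩
  rw [show membershipMatrix z * (c • (1 : Matrix (Fin r) (Fin r) ℝ)) * R = U * R by simp [U]]
  set S := #{i | √((r : ℝ) / (2 * n)) ≤ √(∑ a, (C i a - (U * R) i a) ^ 2)}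
  have hS : (S : ℝ) * (r / (2 * n)) ≤ frobSq (C - U * R) := card_mul_le_frobSq _ _
  have hSγ : (S : ℝ) * ((α - β) ^ 2 * n) = 2 * r * (γ ^ 2 * (S * (r / (2 * n)))) := by
    simp only [γ]; field_simp
  rw [le_div_iff₀ (by positivity), hSγ]
  nlinarith [mul_le_mul_of_nonneg_left (hS.trans hCR) (sq_nonneg γ), frobSq_nonneg (K - Kt)]
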